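/- If u, v : ℝ² → ℝ are C³ with u² + v² = 1 and u·Δv = v·Δu on a rectangle R = [a1,a2]×[b1,b2], then the function f(x,y) = exp(∫_{b1}^{y} G2(x,t) dt + ∫_{a1}^{x} G1(s,b1) ds) satisfies f_x = G1·f and f_y = G2·f, where G1 = -u·u_x - v·v_x - v·u_y + u·v_y and G2 = -u·u_y - v·v_y - u·v_x + v·u_x. -/

import Mathlib

/-!
By symmetry of second derivatives, `∂_y G₁ - ∂_x G₂ = u Δv - v Δu`, so `G₁ dx + G₂ dy` is closed
on the rectangle. For the exponent `F(x,y) = ∫_{b1}^{y} G₂(x,t) dt + ∫_{a1}^{x} G₁(s,b1) ds`, the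
fundamental theorem of calculus gives `∂_y F = G₂`, and differentiation under the integral sign
followed by closedness gives `∂_x F = ∫_{b1}^{y} ∂_y G₁(x,t) dt + G₁(x,b1) = G₁(x,y)`. Both partial
derivatives are continuous, so `F` is differentiable and `f = exp F` has gradient `(G₁, G₂) f`.
-/

noncomputable def pdx (u : ℝ × ℝ → ℝ) (p : ℝ × ℝ) : ℝ := fderiv ℝ u p (1, 0)
noncomputable def pdy (u : ℝ × ℝ → ℝ) (p : ℝ × ℝ) : ℝ := fderiv ℝ u p (0, 1)
noncomputable def plap (u : ℝ × ℝ → ℝ) (p : ℝ × ℝ) : ℝ := pdx (pdx u) p + pdy (pdy u) p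

open Set Filter Topology ContinuousLinearMap

variable {u v g : ℝ × ℝ → ℝ}

theorem ContDiff.pdx {n : WithTop ℕ∞} (hu : ContDiff ℝ (n + 1) u) : ContDiff ℝ n (pdx u) :=
  (hu.fderiv_right le_rfl).clm_apply contDiff_const

theorem ContDiff.pdy {n : WithTop ℕ∞} (hu : ContDiff ℝ (n + 1) u) : ContDiff ℝ n (pdy u) :=
  (hu.fderiv_right le_rfl).clm_apply contDiff_const

theorem HasFDerivAt.pdx_eq {g' : ℝ × ℝ →L[ℝ] ℝ} {p : ℝ × ℝ} (h : HasFDerivAt g g' p) :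
    pdx g p = g' (1, 0) := by
  rw [pdx, h.fderiv]

theorem HasFDerivAt.pdy_eq {g' : ℝ × ℝ →L[ℝ] ℝ} {p : ℝ × ℝ} (h : HasFDerivAt g g' p) :
    pdy g p = g' (0, 1) := by
  rw [pdy, h.fderiv]

theorem pdx_pdy_comm (hu : ContDiff ℝ 2 u) (p : ℝ × ℝ) : pdx (pdy u) p = pdy (pdx u) p := by
  have hd : DifferentiableAt ℝ (fderiv ℝ u) p :=
    ((hu.fderiv_right (m := 1) le_rfl).differentiable one_ne_zero).differentiableAt
  have hsymm := (hu.contDiffAt (x := p)).isSymmSndFDerivAt (by simp)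
  unfold pdx pdy
  rw [fderiv_clm_apply hd (differentiableAt_const _),
    fderiv_clm_apply hd (differentiableAt_const _)]
  simpa using hsymm (1, 0) (0, 1)

theorem hasDerivAt_pdx {x t : ℝ} (hg : DifferentiableAt ℝ g (x, t)) :
    HasDerivAt (fun s => g (s, t)) (pdx g (x, t)) x :=
  hg.hasFDerivAt.comp_hasDerivAt x ((hasDerivAt_id x).prodMk (hasDerivAt_const x t))

theorem hasDerivAt_pdy {x t : ℝ} (hg : DifferentiableAt ℝ g (x, t)) :
    HasDerivAt (fun s => g (x, s)) (pdy g (x, t)) t :=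
  hg.hasFDerivAt.comp_hasDerivAt t ((hasDerivAt_const t x).prodMk (hasDerivAt_id t))

noncomputable def G₁ (u v : ℝ × ℝ → ℝ) (p : ℝ × ℝ) : ℝ :=
  -(u p) * pdx u p - v p * pdx v p - v p * pdy u p + u p * pdy v p

noncomputable def G₂ (u v : ℝ × ℝ → ℝ) (p : ℝ × ℝ) : ℝ :=
  -(u p) * pdy u p - v p * pdy v p - u p * pdx v p + v p * pdx u p

theorem contDiff_G₁ {n : WithTop ℕ∞} (hu : ContDiff ℝ (n + 1) u) (hv : ContDiff ℝ (n + 1) v) :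
    ContDiff ℝ n (G₁ u v) := by
  have hu' := hu.of_le le_self_add
  have hv' := hv.of_le le_self_add
  exact ((hu'.neg.mul hu.pdx).sub (hv'.mul hv.pdx) |>.sub (hv'.mul hu.pdy)).add (hu'.mul hv.pdy)

theorem contDiff_G₂ {n : WithTop ℕ∞} (hu : ContDiff ℝ (n + 1) u) (hv : ContDiff ℝ (n + 1) v) :
    ContDiff ℝ n (G₂ u v) := by
  have hu' := hu.of_le le_self_add
  have hv' := hv.of_le le_self_add
  exact ((hu'.neg.mul hu.pdy).sub (hv'.mul hv.pdy) |>.sub (hu'.mul hv.pdx)).add (hv'.mul hu.pdx)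

theorem pdy_G₁_sub_pdx_G₂ (hu : ContDiff ℝ 2 u) (hv : ContDiff ℝ 2 v) (p : ℝ × ℝ) :
    pdy (G₁ u v) p - pdx (G₂ u v) p = u p * plap v p - v p * plap u p := by
  have hder : ∀ w : ℝ × ℝ → ℝ, ContDiff ℝ 1 w → HasFDerivAt w (fderiv ℝ w p) p :=
    fun w hw => (hw.differentiable one_ne_zero p).hasFDerivAt
  have du := hder u (hu.of_le (by norm_num))
  have dv := hder v (hv.of_le (by norm_num))
  have dux := hder _ hu.pdx
  have duy := hder _ hu.pdy
  have dvx := hder _ hv.pdx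
  have dvy := hder _ hv.pdy
  have H₁ : HasFDerivAt (G₁ u v) _ p :=
    (((du.neg.mul dux).sub (dv.mul dvx)).sub (dv.mul duy)).add (du.mul dvy)
  have H₂ : HasFDerivAt (G₂ u v) _ p :=
    (((du.neg.mul duy).sub (dv.mul dvy)).sub (du.mul dvx)).add (dv.mul dux)
  have su := pdx_pdy_comm hu p
  have sv := pdx_pdy_comm hv p
  rw [H₁.pdy_eq, H₂.pdx_eq, plap, plap]
  simp [pdx, pdy] at su sv ⊢
  linear_combination u p * su + v p * sv

theorem integral_pdy {G : ℝ × ℝ → ℝ} (hG : ContDiff ℝ 1 G) (x a b : ℝ) :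
    ∫ t in a..b, pdy G (x, t) = G (x, b) - G (x, a) :=
  intervalIntegral.integral_eq_sub_of_hasDerivAt
    (fun _ _ => hasDerivAt_pdy (hG.differentiable one_ne_zero _))
    (((hG.pdy (n := 0)).continuous.comp (continuous_const.prodMk continuous_id)).intervalIntegrable
      _ _)

theorem hasDerivAt_intervalIntegral_of_contDiff {G : ℝ × ℝ → ℝ} (hG : ContDiff ℝ 1 G)
    (a b x : ℝ) :
    HasDerivAt (fun x => ∫ t in a..b, G (x, t)) (∫ t in a..b, pdx G (x, t)) x := by
  have hGc : Continuous G := hG.continuous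
  have hGx : Continuous (pdx G) := (hG.pdx (n := 0)).continuous
  obtain ⟨C, hC⟩ : ∃ C, ∀ q ∈ Icc (x - 1) (x + 1) ×ˢ uIcc a b, ‖pdx G q‖ ≤ C :=
    (isCompact_Icc.prod isCompact_uIcc).exists_bound_of_continuousOn hGx.continuousOn
  refine (intervalIntegral.hasDerivAt_integral_of_dominated_loc_of_deriv_le
    (F := fun x t => G (x, t)) (F' := fun x t => pdx G (x, t)) (bound := fun _ => C)
    (Metric.ball_mem_nhds x one_pos) ?_ ?_ ?_ ?_ ?_ ?_).2
  · exact .of_forall fun y =>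
      (hGc.comp (continuous_const.prodMk continuous_id)).aestronglyMeasurable
  · exact (hGc.comp (continuous_const.prodMk continuous_id)).intervalIntegrable _ _
  · exact (hGx.comp (continuous_const.prodMk continuous_id)).aestronglyMeasurable
  · refine .of_forall fun t ht y hy => hC _ ⟨?_, uIoc_subset_uIcc ht⟩
    rw [Metric.mem_ball, Real.dist_eq, abs_lt] at hy
    constructor <;> linarith
  · exact intervalIntegrable_const
  · exact .of_forall fun t _ y _ => hasDerivAt_pdx (hG.differentiable one_ne_zero _)

theorem hasFDerivAt_of_hasDerivAt_partials {gx gy : ℝ × ℝ → ℝ} {p : ℝ × ℝ}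
    (hx : ∀ᶠ q in 𝓝 p, HasDerivAt (fun s => g (s, q.2)) (gx q) q.1)
    (hy : ∀ᶠ q in 𝓝 p, HasDerivAt (fun t => g (q.1, t)) (gy q) q.2)
    (hgx : ContinuousAt gx p) (hgy : ContinuousAt gy p) :
    HasFDerivAt g (gx p • fst ℝ ℝ ℝ + gy p • snd ℝ ℝ ℝ) p := by
  have hspan := (toSpanSingletonCLE (𝕜 := ℝ) (E := ℝ)).continuous
  have := hasStrictFDerivAt_uncurry_coprod (f := fun x y => g (x, y))
    (f₁ := fun x y => (1 : ℝ →L[ℝ] ℝ).smulRight (gx (x, y)))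
    (f₂ := fun x y => (1 : ℝ →L[ℝ] ℝ).smulRight (gy (x, y))) hx hy
    (hspan.continuousAt.comp hgx) (hspan.continuousAt.comp hgy)
  exact (this.hasFDerivAt : HasFDerivAt g _ p).congr_fderiv
    (by ext <;> simp [Function.HasUncurry.uncurry])

theorem hasFDerivAt_potential {P Q : ℝ × ℝ → ℝ} (hP : ContDiff ℝ 1 P) (hQ : ContDiff ℝ 1 Q)
    (a b : ℝ) {p : ℝ × ℝ} (hclosed : ∀ t ∈ uIcc b p.2, pdy P (p.1, t) = pdx Q (p.1, t)) :
    HasFDerivAt (fun q : ℝ × ℝ => (∫ t in b..q.2, Q (q.1, t)) + ∫ s in a..q.1, P (s, b))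
      (P p • fst ℝ ℝ ℝ + Q p • snd ℝ ℝ ℝ) p := by
  have hPb : Continuous fun s => P (s, b) :=
    hP.continuous.comp (continuous_id.prodMk continuous_const)
  have hQx : ∀ x, Continuous fun t => Q (x, t) :=
    fun x => hQ.continuous.comp (continuous_const.prodMk continuous_id)
  -- Closedness is only known along the segment, so away from `p` the `x`-partial derivative
  -- is kept in its integral form, which is continuous everywhere.
  refine (hasFDerivAt_of_hasDerivAt_partials
    (gx := fun q => (∫ t in b..q.2, pdx Q (q.1, t)) + P (q.1, b)) (gy := Q)
    ?_ ?_ ?_ ?_).congr_fderiv ?_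
  · exact .of_forall fun q => (hasDerivAt_intervalIntegral_of_contDiff hQ b q.2 q.1).add
      (hPb.integral_hasStrictDerivAt a q.1).hasDerivAt
  · exact .of_forall fun q => ((hQx q.1).integral_hasStrictDerivAt b q.2).hasDerivAt.add_const
      (∫ s in a..q.1, P (s, b))
  · exact ((intervalIntegral.continuous_parametric_primitive_of_continuous
      (f := fun x t => pdx Q (x, t)) (hQ.pdx (n := 0)).continuous).add
      (hPb.comp continuous_fst)).continuousAt
  · exact hQ.continuous.continuousAt
  have hint : ∫ t in b..p.2, pdx Q (p.1, t) = P p - P (p.1, b) := by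
    rw [← integral_pdy hP]
    exact intervalIntegral.integral_congr fun t ht => (hclosed t ht).symm
  rw [hint, sub_add_cancel]

theorem stmt2_general (a1 a2 b1 b2 : ℝ)
    (R : Set (ℝ × ℝ)) (hR : R = Set.Icc a1 a2 ×ˢ Set.Icc b1 b2)
    (u v : ℝ × ℝ → ℝ)
    (hu : ContDiff ℝ 3 u) (hv : ContDiff ℝ 3 v)
    (hlap : ∀ p ∈ R, u p * plap v p = v p * plap u p)
    (G1 G2 : ℝ × ℝ → ℝ)
    (hG1 : G1 = fun p => -(u p) * pdx u p - v p * pdx v p - v p * pdy u p + u p * pdy v p)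
    (hG2 : G2 = fun p => -(u p) * pdy u p - v p * pdy v p - u p * pdx v p + v p * pdx u p)
    (f : ℝ × ℝ → ℝ)
    (hf : f = fun p => Real.exp ((∫ t in b1..p.2, G2 (p.1, t)) + ∫ s in a1..p.1, G1 (s, b1))) :
    ∀ p ∈ R, pdx f p = G1 p * f p ∧ pdy f p = G2 p * f p := by
  subst hR
  rintro ⟨x, y⟩ ⟨hx, hy⟩
  obtain rfl : G1 = G₁ u v := hG1
  obtain rfl : G2 = G₂ u v := hG2
  have hu2 : ContDiff ℝ 2 u := hu.of_le (by norm_num)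
  have hv2 : ContDiff ℝ 2 v := hv.of_le (by norm_num)
  have hclosed : ∀ t ∈ uIcc b1 y, pdy (G₁ u v) (x, t) = pdx (G₂ u v) (x, t) := by
    intro t ht
    rw [uIcc_of_le hy.1] at ht
    have hxt : (x, t) ∈ Icc a1 a2 ×ˢ Icc b1 b2 := ⟨hx, ht.1, ht.2.trans hy.2⟩
    rw [← sub_eq_zero, pdy_G₁_sub_pdx_G₂ hu2 hv2, hlap _ hxt, sub_self]
  have hF := hasFDerivAt_potential (contDiff_G₁ hu2 hv2) (contDiff_G₂ hu2 hv2) a1 b1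
    (p := (x, y)) hclosed
  have hf' : HasFDerivAt f
      (f (x, y) • (G₁ u v (x, y) • fst ℝ ℝ ℝ + G₂ u v (x, y) • snd ℝ ℝ ℝ)) (x, y) := by
    subst hf
    exact (Real.hasDerivAt_exp _).comp_hasFDerivAt _ hF
  rw [hf'.pdx_eq, hf'.pdy_eq]
  constructor <;> simp [mul_comm]

/-- If `u, v` are `C³` with `u² + v² = 1` and `u·Δv = v·Δu` on the rectangle
`R = [a1,a2] × [b1,b2]`, then
`f(x,y) = exp(∫_{b1}^{y} G2(x,t) dt + ∫_{a1}^{x} G1(s,b1) ds)` satisfies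
`f_x = G1·f` and `f_y = G2·f` on `R`, where `G1, G2` are as in the Cauchy–Riemann reduction. -/
theorem stmt2 (a1 a2 b1 b2 : ℝ) (ha : a1 < a2) (hb : b1 < b2)
    (R : Set (ℝ × ℝ)) (hR : R = Set.Icc a1 a2 ×ˢ Set.Icc b1 b2)
    (u v : ℝ × ℝ → ℝ)
    (hu : ContDiff ℝ 3 u) (hv : ContDiff ℝ 3 v)
    (hnorm : ∀ p ∈ R, (u p) ^ 2 + (v p) ^ 2 = 1)
    (hlap : ∀ p ∈ R, u p * plap v p = v p * plap u p)
    (G1 G2 : ℝ × ℝ → ℝ)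
    (hG1 : G1 = fun p => -(u p) * pdx u p - v p * pdx v p - v p * pdy u p + u p * pdy v p)
    (hG2 : G2 = fun p => -(u p) * pdy u p - v p * pdy v p - u p * pdx v p + v p * pdx u p)
    (f : ℝ × ℝ → ℝ)
    (hf : f = fun p => Real.exp ((∫ t in b1..p.2, G2 (p.1, t)) + ∫ s in a1..p.1, G1 (s, b1))) :
    ∀ p ∈ R, pdx f p = G1 p * f p ∧ pdy f p = G2 p * f p :=
  stmt2_general a1 a2 b1 b2 R hR u v hu hv hlap G1 G2 hG1 hG2 f hf
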